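/- arXiv:2009.10822 — 3 statements merged into one kernel-verified Lean document; each statement's English description precedes it below -/
import Mathlib

section
/- Let N = (V, E, c) be a network, let F = {f_1, …, f_n} be a finite set of flows on N with priority function P, and for each i let paths(f_i) be a finite list that enumerates all simple valid paths for f_i. Suppose (α, ρ, ε) is an ILP assignment for this data satisfying constraints (i)–(iv) that maximizes the objective Σ_{i=1}^{n} P(f_i)·α_i among all ILP assignments satisfying (i)–(iv), and let S be the mapping sending f_i to paths(f_i)_m whenever ρ_{i,m} = 1 and to the empty path otherwise. Then S is a feasible mapping, and for every feasible mapping M one has Σ_{f admitted by M} P(f) ≤ Σ_{f admitted by S} P(f). -/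
/-- A network flow: source node, destination node, and required bandwidth. -/
structure NetFlow (V : Type) where
  s : V
  d : V
  b : ℕ

/-- The list of nodes visited by a path (a path is a list of directed edges). -/
def pathNodes {V : Type} : List (V × V) → List V
  | [] => []
  | e :: rest => e.1 :: (e :: rest).map Prod.snd

/-- A path is simple if it visits no node twice. -/
def IsSimplePath {V : Type} (p : List (V × V)) : Prop :=
  (pathNodes p).Nodup

/-- A (nonempty) path is valid for source `s` and destination `d` in edge set `E`:
all its edges lie in `E`, it starts at `s`, ends at `d`, and is connected. -/
def IsValidPath {V : Type} (E : Finset (V × V)) (s d : V) (p : List (V × V)) : Prop :=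
  p ≠ [] ∧ (∀ e ∈ p, e ∈ E) ∧ p.head?.map Prod.fst = some s ∧
    p.getLast?.map Prod.snd = some d ∧ p.Chain' (fun e e' => e.2 = e'.1)

/-- A mapping `S` of flows to paths (the empty path `[]` meaning the flow is dropped) is
feasible if every assigned path is simple and valid for its flow, and for every edge the
total bandwidth of the flows routed through it does not exceed its capacity. -/
def Feasible {V : Type} [DecidableEq V] {n : ℕ} (E : Finset (V × V)) (c : V × V → ℕ)
    (f : Fin n → NetFlow V) (S : Fin n → List (V × V)) : Prop :=
  (∀ i, S i = [] ∨ (IsSimplePath (S i) ∧ IsValidPath E (f i).s (f i).d (S i))) ∧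
  ∀ e ∈ E, (∑ i, if e ∈ S i then (f i).b else 0) ≤ c e

/-- The ILP constraints (binarity of all variables together with constraints (i)–(iv)). -/
def ILPConstraints {V : Type} {n : ℕ} (E : Finset (V × V)) (c : V × V → ℕ)
    (f : Fin n → NetFlow V) (paths : Fin n → List (List (V × V)))
    (α : Fin n → ℕ) (ρ : (i : Fin n) → Fin (paths i).length → ℕ)
    (ε : Fin n → V × V → ℕ) : Prop :=
  (∀ i, α i ≤ 1) ∧ (∀ i m, ρ i m ≤ 1) ∧ (∀ i e, ε i e ≤ 1) ∧
  -- (i) a flow is admitted iff exactly one of its candidate paths is chosen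
  (∀ i, (∑ m, ρ i m) = α i) ∧
  -- (ii) if a path is chosen, all its edges must route the flow
  (∀ i (m : Fin (paths i).length),
      ((paths i).get m).length * ρ i m ≤ (((paths i).get m).map (ε i)).sum) ∧
  -- (iii) capacity of every edge is respected
  (∀ e ∈ E, (∑ i, (f i).b * ε i e) ≤ c e) ∧
  -- (iv) edges not occurring in any candidate path of a flow cannot route it
  (∀ i e, (∀ p ∈ paths i, e ∉ p) → ε i e = 0)

/-- The total priority of the flows admitted by a mapping `S`. -/
def admittedPriority {V : Type} [DecidableEq V] {n : ℕ} (P : NetFlow V → ℕ)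
    (f : Fin n → NetFlow V) (S : Fin n → List (V × V)) : ℕ :=
  ∑ i, if S i ≠ [] then P (f i) else 0

/-!
Since all ILP variables are binary, constraint (ii) forces `ε i e = 1` on every edge of the path
selected by (i), so (iii) bounds the load of `S` on each edge. Conversely, a feasible mapping `M`
routes each admitted flow along one of its candidate paths, and setting `ε i e = 1` exactly on the
edges of `M i` yields an ILP assignment whose objective is the priority admitted by `M`; optimality
of `α` bounds it by the objective of `α`, which is at most the priority admitted by `S`.
-/

theorem List.forall_eq_one_of_length_le_sum_map {ι : Type*} {g : ι → ℕ} {l : List ι}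
    (hg : ∀ x ∈ l, g x ≤ 1) (h : l.length ≤ (l.map g).sum) : ∀ x ∈ l, g x = 1 := by
  by_contra! hlt
  have hsum : (l.map g).sum < (l.map fun _ => 1).sum :=
    List.sum_lt_sum g _ hg (hlt.imp fun x ⟨hx, hne⟩ => ⟨hx, lt_of_le_of_ne (hg x hx) hne⟩)
  simp only [List.map_const', List.sum_replicate, smul_eq_mul, mul_one] at hsum
  omega

section

variable {V : Type} {n : ℕ} {E : Finset (V × V)} {c : V × V → ℕ} {f : Fin n → NetFlow V}
  {paths : Fin n → List (List (V × V))} {α : Fin n → ℕ}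
  {ρ : (i : Fin n) → Fin (paths i).length → ℕ} {ε : Fin n → V × V → ℕ}

namespace ILPConstraints

theorem edge_eq_one (h : ILPConstraints E c f paths α ρ ε) {i : Fin n}
    {m : Fin (paths i).length} (hm : ρ i m = 1) {e : V × V} (he : e ∈ (paths i).get m) :
    ε i e = 1 := by
  have hii := h.2.2.2.2.1 i m
  rw [hm, mul_one] at hii
  exact List.forall_eq_one_of_length_le_sum_map (fun e _ => h.2.2.1 i e) hii e he

theorem exists_rho_eq_one (h : ILPConstraints E c f paths α ρ ε) {i : Fin n} (hα : α i ≠ 0) :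
    ∃ m, ρ i m = 1 := by
  rw [← h.2.2.2.1 i] at hα
  obtain ⟨m, -, hm⟩ := Finset.exists_ne_zero_of_sum_ne_zero hα
  exact ⟨m, by have := h.2.1 i m; omega⟩

variable [DecidableEq V] {S : Fin n → List (V × V)}

theorem feasible (h : ILPConstraints E c f paths α ρ ε)
    (hvalid : ∀ i, ∀ p ∈ paths i, IsSimplePath p ∧ IsValidPath E (f i).s (f i).d p)
    (hS₁ : ∀ i m, ρ i m = 1 → S i = (paths i).get m) (hS₂ : ∀ i, (∀ m, ρ i m ≠ 1) → S i = []) :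
    Feasible E c f S := by
  have hselected : ∀ i, S i ≠ [] → ∃ m, ρ i m = 1 ∧ S i = (paths i).get m := fun i hi => by
    by_contra! hnone
    exact hi (hS₂ i fun m hm => hnone m hm (hS₁ i m hm))
  refine ⟨fun i => or_iff_not_imp_left.2 fun hi => ?_, fun e he => ?_⟩
  · obtain ⟨m, -, hSm⟩ := hselected i hi
    exact hSm ▸ hvalid i _ (List.get_mem _ _)
  · refine le_trans (Finset.sum_le_sum fun i _ => ?_) (h.2.2.2.2.2.1 e he)
    split_ifs with heS
    · obtain ⟨m, hm, hSm⟩ := hselected i (List.ne_nil_of_mem heS)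
      rw [h.edge_eq_one hm (hSm ▸ heS), mul_one]
    · exact Nat.zero_le _

theorem objective_le_admittedPriority (h : ILPConstraints E c f paths α ρ ε)
    (hnil : ∀ i, [] ∉ paths i) (hS₁ : ∀ i m, ρ i m = 1 → S i = (paths i).get m)
    (P : NetFlow V → ℕ) : ∑ i, P (f i) * α i ≤ admittedPriority P f S := by
  refine Finset.sum_le_sum fun i _ => ?_
  rcases Nat.eq_zero_or_pos (α i) with hα | hα
  · simp [hα]
  obtain ⟨m, hm⟩ := h.exists_rho_eq_one hα.ne'
  have hS : S i ≠ [] := by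
    rw [hS₁ i m hm]
    exact fun hnil' => hnil i (hnil' ▸ List.get_mem _ _)
  have hα1 : α i = 1 := le_antisymm (h.1 i) hα
  simp [hS, hα1]

end ILPConstraints

theorem Feasible.exists_ilpConstraints [DecidableEq V] {M : Fin n → List (V × V)}
    (hM : Feasible E c f M) (hmem : ∀ i, M i ≠ [] → M i ∈ paths i) :
    ∃ ρ ε, ILPConstraints E c f paths (fun i => if M i ≠ [] then 1 else 0) ρ ε := by
  choose idx hidx using fun i (hi : M i ≠ []) => List.mem_iff_get.1 (hmem i hi)
  refine ⟨fun i => if hi : M i ≠ [] then Pi.single (idx i hi) 1 else 0,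
    fun i e => if e ∈ M i then 1 else 0, ?_⟩
  refine ⟨fun i => ?_, fun i m => ?_, fun i e => ?_, fun i => ?_, fun i m => ?_, fun e he => ?_,
    fun i e he => ?_⟩ <;> dsimp only
  · split_ifs <;> simp
  · split_ifs with hi
    · by_cases hm : m = idx i hi <;> simp [hm]
    · simp
  · split_ifs <;> simp
  · split_ifs with hi <;> simp [Finset.sum_pi_single']
  · split_ifs with hi
    · by_cases hm : m = idx i hi
      · subst hm
        rw [hidx i hi]
        simp [List.map_congr_left (fun e (he : e ∈ M i) => if_pos he)]
      · simp [hm]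
    · simp
  · simpa [mul_ite] using hM.2 e he
  · by_cases hi : M i = []
    · simp [hi]
    · simp [he _ (hmem i hi)]

end

/-- An optimal ILP assignment satisfying (i)–(iv) induces a feasible mapping `S` whose
total admitted priority is maximal among all feasible mappings. -/
theorem ilp_optimal_solution_is_optimal_pfar {V : Type} [DecidableEq V] {n : ℕ}
    (E : Finset (V × V)) (c : V × V → ℕ) (f : Fin n → NetFlow V) (P : NetFlow V → ℕ)
    (paths : Fin n → List (List (V × V)))
    -- `paths i` enumerates all simple valid paths for the flow `f i`
    (hpaths : ∀ i p, p ∈ paths i ↔ IsSimplePath p ∧ IsValidPath E (f i).s (f i).d p)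
    (α : Fin n → ℕ) (ρ : (i : Fin n) → Fin (paths i).length → ℕ)
    (ε : Fin n → V × V → ℕ)
    (hILP : ILPConstraints E c f paths α ρ ε)
    -- the assignment maximizes the objective among all ILP assignments
    (hmax : ∀ (α' : Fin n → ℕ) (ρ' : (i : Fin n) → Fin (paths i).length → ℕ)
        (ε' : Fin n → V × V → ℕ), ILPConstraints E c f paths α' ρ' ε' →
        (∑ i, P (f i) * α' i) ≤ ∑ i, P (f i) * α i)
    (S : Fin n → List (V × V))
    -- `S` sends `f i` to `paths(f_i)_m` whenever `ρ i m = 1`, and to the empty path otherwise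
    (hS₁ : ∀ i m, ρ i m = 1 → S i = (paths i).get m)
    (hS₂ : ∀ i, (∀ m, ρ i m ≠ 1) → S i = []) :
    Feasible E c f S ∧
      ∀ M : Fin n → List (V × V), Feasible E c f M →
        admittedPriority P f M ≤ admittedPriority P f S := by
  refine ⟨hILP.feasible (fun i p => (hpaths i p).1) hS₁ hS₂, fun M hM => ?_⟩
  obtain ⟨ρ', ε', hILP'⟩ :=
    hM.exists_ilpConstraints fun i hi => (hpaths i _).2 ((hM.1 i).resolve_left hi)
  have hnil : ∀ i, [] ∉ paths i := fun i hi => ((hpaths i []).1 hi).2.1 rfl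
  calc admittedPriority P f M = ∑ i, P (f i) * if M i ≠ [] then 1 else 0 := by
        simp [admittedPriority]
    _ ≤ ∑ i, P (f i) * α i := hmax _ ρ' ε' hILP'
    _ ≤ admittedPriority P f S := hILP.objective_le_admittedPriority hnil hS₁ P
end

section
/- Let N = (V, E, c) be a network, let f_1, …, f_n be flows on N with priority function P, and for each i let paths(f_i) be a finite list of simple valid paths for f_i whose paths have pairwise distinct edges. For every feasible mapping M such that each M(f_i) is either the empty path or a member of the list paths(f_i), there exists an ILP assignment (α, ρ, ε) satisfying constraints (i)–(iv) whose objective value Σ_{i=1}^{n} P(f_i)·α_i equals Σ_{f admitted by M} P(f). -/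
/-- Completeness of the ILP: every feasible mapping choosing its (nonempty) paths from
the candidate lists gives rise to an ILP assignment satisfying constraints (i)–(iv) with
the same objective value. -/
theorem feasible_mapping_gives_ilp_assignment {V : Type} [DecidableEq V] {n : ℕ}
    (E : Finset (V × V)) (c : V × V → ℕ) (f : Fin n → NetFlow V) (P : NetFlow V → ℕ)
    (paths : Fin n → List (List (V × V)))
    -- every member of `paths i` is a simple valid path for the flow `f i` ...
    (hpaths : ∀ i, ∀ p ∈ paths i, IsSimplePath p ∧ IsValidPath E (f i).s (f i).d p)
    -- ... with pairwise distinct edges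
    (hnodup : ∀ i, ∀ p ∈ paths i, p.Nodup)
    (M : Fin n → List (V × V))
    (hM : Feasible E c f M)
    -- each `M i` is either the empty path or a member of the list `paths i`
    (hMmem : ∀ i, M i = [] ∨ M i ∈ paths i) :
    ∃ (α : Fin n → ℕ) (ρ : (i : Fin n) → Fin (paths i).length → ℕ)
      (ε : Fin n → V × V → ℕ),
      ILPConstraints E c f paths α ρ ε ∧
        (∑ i, P (f i) * α i) = admittedPriority P f M := by
  classical
  have hne : ∀ i, M i ≠ [] ↔ M i ∈ paths i := by
    intro i
    constructor
    · intro h; exact (hMmem i).resolve_left h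
    · intro h; exact (hpaths i _ h).2.1
  let idx : (i : Fin n) → M i ∈ paths i → Fin (paths i).length :=
    fun i h => (List.mem_iff_get.1 h).choose
  have hidx : ∀ i (h : M i ∈ paths i), (paths i).get (idx i h) = M i :=
    fun i h => (List.mem_iff_get.1 h).choose_spec
  refine ⟨fun i => if M i ≠ [] then 1 else 0,
    fun i m => if h : M i ∈ paths i then (if m = idx i h then 1 else 0) else 0,
    fun i e => if e ∈ M i then 1 else 0, ?_, ?_⟩
  · refine ⟨fun i => ?_, fun i m => ?_, fun i e => ?_, fun i => ?_, fun i m => ?_,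
      fun e he => ?_, fun i e h => ?_⟩
    · dsimp only; split <;> simp
    · dsimp only; split
      · split <;> simp
      · simp
    · dsimp only; split <;> simp
    · dsimp only
      by_cases h : M i ∈ paths i
      · simp only [dif_pos h, Finset.sum_ite_eq' Finset.univ (idx i h) (fun _ => 1),
          if_pos (Finset.mem_univ _)]
        rw [if_pos ((hne i).2 h)]
      · have : M i = [] := not_not.1 (fun hn => h ((hne i).1 hn))
        simp only [dif_neg h, Finset.sum_const_zero]
        simp [this]
    · dsimp only
      by_cases h : M i ∈ paths i
      · by_cases hm : m = idx i h
        · subst hm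
          rw [dif_pos h, if_pos rfl, mul_one, hidx i h]
          have : (M i).map (fun e => if e ∈ M i then 1 else 0) =
              (M i).map (fun _ => 1) := List.map_congr_left fun a ha => if_pos ha
          simp [this]
        · simp [h, hm]
      · simp [h]
    · refine le_trans (le_of_eq ?_) (hM.2 e he)
      refine Finset.sum_congr rfl fun i _ => ?_
      dsimp only; split <;> simp
    · rcases hMmem i with h' | h'
      · simp [h']
      · exact if_neg (h _ h')
  · unfold admittedPriority
    refine Finset.sum_congr rfl fun i _ => ?_
    dsimp only; split <;> simp [*]
end

section
/- Let n ≥ 2 and let s and t be two distinct vertices of the complete directed graph on n vertices. The number of simple paths from s to t, viewed as a real number, equals (n-2)! · Σ_{i=0}^{n-2} 1/i!; moreover, for n ≥ 3 this number equals ⌊e · (n-2)!⌋, where e is Euler's number. -/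
/-- The set of simple paths from `s` to `t` in the directed graph with edge set `E`:
finite nonempty sequences of edges of `E`, starting at `s`, ending at `t`, connected,
and visiting no vertex twice. -/
def SimplePathsBetween {V : Type} (E : Set (V × V)) (s t : V) : Set (List (V × V)) :=
  {p | p ≠ [] ∧ (∀ e ∈ p, e ∈ E) ∧ p.head?.map Prod.fst = some s ∧
       p.getLast?.map Prod.snd = some t ∧ p.Chain' (fun e e' => e.2 = e'.1) ∧
       (pathNodes p).Nodup}

/-- The complete directed graph: an edge for every ordered pair of distinct vertices. -/
def completeDigraph (V : Type) : Set (V × V) := {e : V × V | e.1 ≠ e.2}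

namespace CDPaux

variable {V : Type}

def edgesOf : List V → List (V × V)
  | [] => []
  | [_] => []
  | a :: b :: rest => (a, b) :: edgesOf (b :: rest)

lemma edgesOf_chain' : ∀ l : List V, (edgesOf l).Chain' (fun e e' => e.2 = e'.1)
  | [] => by simp [edgesOf, List.Chain']
  | [_] => by simp [edgesOf, List.Chain']
  | a :: b :: rest => by
      have ih := edgesOf_chain' (b :: rest)
      cases rest with
      | nil => simp [edgesOf, List.Chain']
      | cons c r =>
          rw [show edgesOf (a :: b :: c :: r) = (a, b) :: edgesOf (b :: c :: r) from rfl]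
          rw [show edgesOf (b :: c :: r) = (b, c) :: edgesOf (c :: r) from rfl] at ih ⊢
          exact List.IsChain.cons_cons rfl ih

lemma pathNodes_edgesOf : ∀ (a b : V) (l : List V),
    pathNodes (edgesOf (a :: b :: l)) = a :: b :: l
  | a, b, [] => rfl
  | a, b, c :: r => by
      have ih := pathNodes_edgesOf b c r
      rw [show edgesOf (a :: b :: c :: r) = (a, b) :: edgesOf (b :: c :: r) from rfl]
      rw [show edgesOf (b :: c :: r) = (b, c) :: edgesOf (c :: r) from rfl] at ih ⊢
      simp only [pathNodes, List.map_cons] at ih ⊢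
      simpa using ih

lemma mem_edgesOf_ne : ∀ l : List V, l.Chain' (· ≠ ·) →
    ∀ e ∈ edgesOf l, e.1 ≠ e.2
  | [], _, e, he => by simp [edgesOf] at he
  | [_], _, e, he => by simp [edgesOf] at he
  | a :: b :: rest, h, e, he => by
      rw [show edgesOf (a :: b :: rest) = (a, b) :: edgesOf (b :: rest) from rfl] at he
      rcases List.mem_cons.1 he with rfl | he'
      · exact (List.isChain_cons_cons.1 h).1
      · exact mem_edgesOf_ne (b :: rest) (List.isChain_cons_cons.1 h).2 e he'

lemma getLast?_edgesOf : ∀ (a b : V) (l : List V),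
    ((edgesOf (a :: b :: l)).getLast?).map Prod.snd = (b :: l).getLast?
  | a, b, [] => rfl
  | a, b, c :: r => by
      have ih := getLast?_edgesOf b c r
      rw [show edgesOf (a :: b :: c :: r) = (a, b) :: edgesOf (b :: c :: r) from rfl]
      rw [show edgesOf (b :: c :: r) = (b, c) :: edgesOf (c :: r) from rfl] at ih ⊢
      rw [List.getLast?_cons_cons, ih, ← List.getLast?_cons_cons]

lemma edgesOf_pathNodes : ∀ p : List (V × V), p ≠ [] →
    p.Chain' (fun e e' => e.2 = e'.1) → edgesOf (pathNodes p) = p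
  | [], h, _ => absurd rfl h
  | [(a, b)], _, _ => rfl
  | (a, b) :: (c, d) :: r, _, hch => by
      obtain ⟨hbc, hch'⟩ := List.isChain_cons_cons.1 hch
      have ih := edgesOf_pathNodes ((c, d) :: r) (by simp) hch'
      simp only at hbc
      subst hbc
      simp only [pathNodes, List.map_cons] at ih ⊢
      rw [show edgesOf (a :: b :: d :: List.map Prod.snd r)
            = (a, b) :: edgesOf (b :: d :: List.map Prod.snd r) from rfl]
      rw [ih]

end CDPaux

namespace CDPaux

def decode (s t : V) (l : List V) : List (V × V) := edgesOf (s :: (l ++ [t]))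

def goodLists (s t : V) : Set (List V) := {l | (s :: (l ++ [t])).Nodup}

lemma pathNodes_decode (s t : V) (l : List V) :
    pathNodes (decode s t l) = s :: (l ++ [t]) := by
  cases l with
  | nil => exact pathNodes_edgesOf s t []
  | cons a r => exact pathNodes_edgesOf s a (r ++ [t])

lemma bijOn_decode (s t : V) :
    Set.BijOn (decode s t) (goodLists s t)
      (SimplePathsBetween (completeDigraph V) s t) := by
  refine ⟨?_, ?_, ?_⟩
  · intro l hl
    have hl' : (s :: (l ++ [t])).Nodup := hl
    refine ⟨?_, ?_, ?_, ?_, ?_, ?_⟩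
    · cases l <;> simp [decode, edgesOf]
    · intro e he
      exact mem_edgesOf_ne _ (List.Pairwise.isChain hl') e he
    · cases l <;> rfl
    · cases l with
      | nil => rfl
      | cons a r =>
          show ((edgesOf (s :: a :: (r ++ [t]))).getLast?).map Prod.snd = some t
          rw [getLast?_edgesOf]
          rw [show a :: (r ++ [t]) = (a :: r) ++ [t] from rfl, List.getLast?_concat]
    · exact edgesOf_chain' _
    · rw [show pathNodes (decode s t l) = s :: (l ++ [t]) from pathNodes_decode s t l]
      exact hl'
  · intro l1 _ l2 _ heq
    have h := congrArg pathNodes heq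
    rw [pathNodes_decode, pathNodes_decode] at h
    simpa using h
  · intro p hp
    obtain ⟨hne, hE, hhead, hlast, hch, hnd⟩ := hp
    obtain ⟨e, rest, rfl⟩ := List.exists_cons_of_ne_nil hne
    have hs : e.1 = s := by simpa using hhead
    set L := (e :: rest).map Prod.snd with hL
    have hLne : L ≠ [] := by simp [hL]
    have hlast' : L.getLast? = some t := by
      rw [hL, List.getLast?_map]; exact hlast
    have hm : L.dropLast ++ [t] = L :=
      List.dropLast_append_getLast? t (by rw [hlast']; rfl)
    have hpn : pathNodes (e :: rest) = s :: (L.dropLast ++ [t]) := by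
      show e.1 :: L = _
      rw [hs, hm]
    refine ⟨L.dropLast, ?_, ?_⟩
    · show (s :: (L.dropLast ++ [t])).Nodup
      rw [← hpn]; exact hnd
    · show edgesOf (s :: (L.dropLast ++ [t])) = e :: rest
      rw [← hpn]
      exact edgesOf_pathNodes _ hne hch

end CDPaux

namespace CDPaux

lemma goodLists_iff (s t : V) (hst : s ≠ t) (l : List V) :
    l ∈ goodLists s t ↔ l.Nodup ∧ ∀ v ∈ l, v ≠ s ∧ v ≠ t := by
  show (s :: (l ++ [t])).Nodup ↔ _
  simp only [List.nodup_cons, List.nodup_append, List.mem_append, List.mem_singleton,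
    List.nodup_singleton, List.disjoint_singleton, not_or]
  constructor
  · intro h
    aesop
  · rintro ⟨hl, hmem⟩
    have hs : s ∉ l := fun a => (hmem s a).1 rfl
    have ht : t ∉ l := fun a => (hmem t a).2 rfl
    aesop

lemma heq_emb {W : Type} {n₁ n₂ : ℕ} (h : n₁ = n₂) (f₁ : Fin n₁ ↪ W) (f₂ : Fin n₂ ↪ W)
    (hf : ∀ (i₁ : Fin n₁) (i₂ : Fin n₂), (i₁ : ℕ) = (i₂ : ℕ) → f₁ i₁ = f₂ i₂) :
    HEq f₁ f₂ := by
  subst h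
  apply heq_of_eq
  ext i
  exact hf i i rfl

def listEmb (s t : V) (l : List V) (hnd : l.Nodup) (hmem : ∀ v ∈ l, v ≠ s ∧ v ≠ t) :
    Fin l.length ↪ {v : V // v ≠ s ∧ v ≠ t} where
  toFun i := ⟨l.get i, hmem _ (l.get_mem _)⟩
  inj' i j h := List.nodup_iff_injective_get.1 hnd (congrArg Subtype.val h)

variable [Fintype V] [DecidableEq V]

noncomputable def goodEquiv (s t : V) (hst : s ≠ t) :
    (goodLists s t : Set (List V)) ≃
      Σ k : Fin (Fintype.card {v : V // v ≠ s ∧ v ≠ t} + 1),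
        (Fin (k : ℕ) ↪ {v : V // v ≠ s ∧ v ≠ t}) where
  toFun x :=
    ⟨⟨x.1.length, Nat.lt_succ_of_le (by
        have h := (goodLists_iff s t hst x.1).1 x.2
        have := Fintype.card_le_of_embedding (listEmb s t x.1 h.1 h.2)
        simpa using this)⟩,
      listEmb s t x.1 ((goodLists_iff s t hst x.1).1 x.2).1
        ((goodLists_iff s t hst x.1).1 x.2).2⟩
  invFun y :=
    ⟨List.ofFn (fun i => ((y.2 i : {v : V // v ≠ s ∧ v ≠ t}) : V)), by
      rw [goodLists_iff s t hst]
      refine ⟨List.nodup_ofFn.2 (fun i j h => y.2.injective (Subtype.ext h)), ?_⟩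
      intro v hv
      obtain ⟨i, hi⟩ := List.mem_ofFn.1 hv
      exact hi ▸ (y.2 i).2⟩
  left_inv x := by
    apply Subtype.ext
    exact List.ofFn_get x.1
  right_inv y := by
    obtain ⟨⟨k, hk⟩, f⟩ := y
    apply Sigma.ext
    · apply Fin.ext
      simp [List.length_ofFn]
    · apply heq_emb
      · simp [List.length_ofFn]
      · intro i₁ i₂ hi
        apply Subtype.ext
        simp only [listEmb, Function.Embedding.coeFn_mk, List.get_ofFn]
        exact congrArg (fun j => ((f j : {v : V // v ≠ s ∧ v ≠ t}) : V)) (Fin.ext hi)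

end CDPaux

namespace CDPaux

variable {V : Type} [Fintype V] [DecidableEq V]

lemma card_W (s t : V) (hst : s ≠ t) :
    Fintype.card {v : V // v ≠ s ∧ v ≠ t} = Fintype.card V - 2 := by
  rw [Fintype.card_subtype]
  rw [show Finset.filter (fun v => v ≠ s ∧ v ≠ t) Finset.univ
      = (Finset.univ : Finset V) \ {s, t} by ext v; simp [not_or]]
  rw [Finset.card_sdiff_of_subset (Finset.subset_univ _), Finset.card_univ, Finset.card_pair hst]

lemma ncard_goodLists (s t : V) (hst : s ≠ t) :
    (goodLists s t).ncard =
      ∑ k ∈ Finset.range (Fintype.card V - 2 + 1),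
        (Fintype.card V - 2).descFactorial k := by
  rw [← Nat.card_coe_set_eq]
  rw [Nat.card_congr (goodEquiv s t hst)]
  rw [Nat.card_eq_fintype_card, Fintype.card_sigma, card_W s t hst,
    ← Fin.sum_univ_eq_sum_range]
  refine Finset.sum_congr rfl ?_
  intro k _
  rw [Fintype.card_embedding_eq, Fintype.card_fin, card_W s t hst]

lemma ncard_SPB (s t : V) (hst : s ≠ t) :
    (SimplePathsBetween (completeDigraph V) s t).ncard =
      ∑ k ∈ Finset.range (Fintype.card V - 2 + 1),
        (Fintype.card V - 2).descFactorial k := by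
  rw [← Nat.card_coe_set_eq,
    Nat.card_congr (Set.BijOn.equiv _ (bijOn_decode s t)).symm,
    Nat.card_coe_set_eq, ncard_goodLists s t hst]

end CDPaux

namespace CDPaux

lemma sum_descFactorial_real (m : ℕ) :
    ((∑ k ∈ Finset.range (m + 1), m.descFactorial k : ℕ) : ℝ) =
      (m.factorial : ℝ) * ∑ i ∈ Finset.range (m + 1), (1 : ℝ) / (Nat.factorial i) := by
  push_cast
  rw [Finset.mul_sum, ← Finset.sum_range_reflect]
  refine Finset.sum_congr rfl ?_
  intro k hk
  have hk' : k ≤ m := by simpa [Nat.lt_succ_iff] using Finset.mem_range.1 hk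
  have h1 : m + 1 - 1 - k = m - k := by omega
  rw [h1]
  have h2 := Nat.factorial_mul_descFactorial (Nat.sub_le m k)
  rw [show m - (m - k) = k by omega] at h2
  have h3 : (Nat.factorial k : ℝ) * (m.descFactorial (m - k) : ℝ) = m.factorial := by
    exact_mod_cast congrArg (Nat.cast (R := ℝ)) h2
  have hkpos : (0:ℝ) < Nat.factorial k := by exact_mod_cast k.factorial_pos
  field_simp
  linarith [h3]

lemma floor_part (m : ℕ) (hm : 1 ≤ m) :
    ⌊Real.exp 1 * (m.factorial : ℝ)⌋₊ =
      ∑ k ∈ Finset.range (m + 1), m.descFactorial k := by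
  have hS := sum_descFactorial_real m
  set N := ∑ k ∈ Finset.range (m + 1), m.descFactorial k with hN
  set S := ∑ i ∈ Finset.range (m + 1), (1 : ℝ) / (Nat.factorial i) with hSdef
  have hfac : (0:ℝ) < m.factorial := by exact_mod_cast m.factorial_pos
  have hlow : (N : ℝ) ≤ Real.exp 1 * m.factorial := by
    have h := Real.sum_le_exp_of_nonneg (by norm_num : (0:ℝ) ≤ 1) (m + 1)
    simp only [one_pow] at h
    rw [hS]
    have hSle : S ≤ Real.exp 1 := h
    nlinarith
  have hup : Real.exp 1 * m.factorial < (N : ℝ) + 1 := by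
    have h := Real.exp_bound (x := 1) (by norm_num) (n := m + 1) (Nat.succ_pos m)
    simp only [abs_one, one_pow, one_mul] at h
    have habs := (abs_sub_le_iff.1 h).1
    -- exp 1 - S ≤ (m+2) / ((m+1)! * (m+1))
    have hfac1 : ((m+1).factorial : ℝ) = (m+1) * m.factorial := by
      exact_mod_cast Nat.factorial_succ m
    have hm1 : (1:ℝ) ≤ (m:ℝ) := by exact_mod_cast hm
    have hkey : (m.factorial : ℝ) * ((((m+1):ℕ).succ : ℝ) / (((m+1).factorial : ℝ) * ((m+1):ℕ))) < 1 := by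
      rw [hfac1]
      push_cast
      rw [← mul_div_assoc, div_lt_one (by positivity)]
      nlinarith
    have hS' : (N : ℝ) = m.factorial * S := hS
    push_cast at hkey habs ⊢
    nlinarith
  rw [Nat.floor_eq_iff (by positivity)]
  exact ⟨hlow, hup⟩

end CDPaux


/-- In the complete directed graph on `n ≥ 2` vertices, the number of simple paths
between two fixed distinct vertices equals, as a real number,
`(n-2)! · Σ_{i=0}^{n-2} 1/i!`; moreover for `n ≥ 3` it equals `⌊e · (n-2)!⌋`. -/
theorem complete_digraph_simple_path_count_real {V : Type} [Fintype V]
    (s t : V) (hst : s ≠ t) (h2 : 2 ≤ Fintype.card V) :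
    ((SimplePathsBetween (completeDigraph V) s t).ncard : ℝ) =
      ((Fintype.card V - 2).factorial : ℝ) *
        (∑ i ∈ Finset.range (Fintype.card V - 1), (1 : ℝ) / (Nat.factorial i)) ∧
    (3 ≤ Fintype.card V →
      (SimplePathsBetween (completeDigraph V) s t).ncard =
        ⌊Real.exp 1 * ((Fintype.card V - 2).factorial : ℝ)⌋₊) := by
    classical
  have hcount := CDPaux.ncard_SPB s t hst
  have hm : Fintype.card V - 1 = Fintype.card V - 2 + 1 := by omega
  constructor
  · rw [hcount, hm]
    exact CDPaux.sum_descFactorial_real _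
  · intro h3
    rw [hcount]
    exact (CDPaux.floor_part _ (by omega)).symm
end
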